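/- arXiv:2311.18106 — 4 statements merged into one kernel-verified Lean document; each statement's English description precedes it below -/
import Mathlib

section
/- Let N, m₁ be positive integers with m₁ dividing N, and let p₀, p₁ ∈ ℝ. Let P = (1−p₁)·I_N + (p₁−p₀)·(I_{N/m₁} ⊗ J_{m₁}) + p₀·J_N, where J_d is the d×d all-ones matrix and I_{N/m₁} ⊗ J_{m₁} is the block-diagonal matrix with N/m₁ diagonal blocks equal to J_{m₁}. Then the characteristic polynomial of P equals (X − (1−p₁))^{N − N/m₁} · (X − ((1−p₁) + m₁(p₁−p₀)))^{N/m₁ − 1} · (X − ((1−p₁) + m₁(p₁−p₀) + N·p₀)). Equivalently, P has eigenvalue 1−p₁ with multiplicity N − N/m₁, eigenvalue (1−p₁) + m₁(p₁−p₀) with multiplicity N/m₁ − 1, and eigenvalue (1−p₁) + m₁(p₁−p₀) + N·p₀ with multiplicity 1. -/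
/-!
In block coordinates `Fin N ≃ Fin (N/m₁) × Fin m₁` the matrix is
`a • 1 + b • (1 ⊗ₖ J) + c • (J ⊗ₖ J)` with `J` an all-ones matrix. One invertible matrix `W_d`
diagonalises every `J_d` (with eigenvalues `d, 0, …, 0`), so `W_k ⊗ₖ W_m` simultaneously
diagonalises all three terms, and the characteristic polynomial is read off the diagonal
`a + b·[r = 0]·m + c·[q = 0 ∧ r = 0]·k·m`.
-/

open Polynomial Matrix Kronecker

namespace Matrix

variable {R : Type*} [CommRing R]

def allOnes (n : Type*) (R : Type*) [One R] : Matrix n n R := of fun _ _ => 1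

def allOnesEigenvalues (d : ℕ) [NeZero d] : Fin d → R := Pi.single 0 (d : R)

def allOnesEigenbasis (d : ℕ) [NeZero d] : Matrix (Fin d) (Fin d) R :=
  of fun i => if i = 0 then 1 else Pi.single i 1 - Pi.single 0 1

theorem allOnesEigenbasis_mul_allOnes (d : ℕ) [NeZero d] :
    allOnesEigenbasis d * allOnes (Fin d) R =
      diagonal (allOnesEigenvalues d) * allOnesEigenbasis d := by
  ext i j
  rw [diagonal_mul, mul_apply]
  by_cases hi : i = 0
  · subst hi
    simp [allOnesEigenbasis, allOnes, allOnesEigenvalues]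
  · simp [allOnesEigenbasis, allOnes, allOnesEigenvalues, hi, Finset.sum_sub_distrib]

theorem isUnit_allOnesEigenbasis {K : Type*} [Field K] [CharZero K] (d : ℕ) [NeZero d] :
    IsUnit (allOnesEigenbasis d : Matrix (Fin d) (Fin d) K) := by
  rw [isUnit_iff_isUnit_det, isUnit_iff_ne_zero, Ne, ← exists_mulVec_eq_zero_iff]
  rintro ⟨v, hv, hWv⟩
  have hconst : ∀ i, v i = v 0 := by
    intro i
    by_cases hi : i = 0
    · rw [hi]
    · simpa [allOnesEigenbasis, mulVec, dotProduct, hi, sub_mul, Finset.sum_sub_distrib,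
        sub_eq_zero, Pi.single_apply] using congrFun hWv i
  have hsum : ∑ i, v i = 0 := by
    simpa [allOnesEigenbasis, mulVec, dotProduct] using congrFun hWv 0
  have hv0 : v 0 = 0 := by simpa [hconst, NeZero.ne d] using hsum
  exact hv (funext fun i => by rw [hconst, hv0, Pi.zero_apply])

theorem isUnit_kronecker {l m : Type*} [Fintype l] [Fintype m] [DecidableEq l] [DecidableEq m]
    {A : Matrix l l R} {B : Matrix m m R} (hA : IsUnit A) (hB : IsUnit B) :
    IsUnit (A ⊗ₖ B) := by
  rw [isUnit_iff_isUnit_det] at hA hB ⊢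
  rw [det_kronecker]
  exact (hA.pow _).mul (hB.pow _)

theorem kronecker_mul_kronecker_of_mul_eq {l m : Type*} [Fintype l] [Fintype m]
    {U A A' : Matrix l l R} {V B B' : Matrix m m R} (hA : U * A = A' * U)
    (hB : V * B = B' * V) : (U ⊗ₖ V) * (A ⊗ₖ B) = (A' ⊗ₖ B') * (U ⊗ₖ V) := by
  rw [← mul_kronecker_mul, hA, hB, mul_kronecker_mul]

theorem charpoly_eq_of_mul_eq_mul {n : Type*} [Fintype n] [DecidableEq n]
    {U A B : Matrix n n R} (hU : IsUnit U) (h : U * A = B * U) : A.charpoly = B.charpoly := by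
  obtain ⟨u, rfl⟩ := hU
  have hA : A = ((u⁻¹ : (Matrix n n R)ˣ) : Matrix n n R) * (B * u) := by
    rw [← h, ← mul_assoc, u.inv_mul, one_mul]
  rw [hA, charpoly_mul_comm, mul_assoc, u.mul_inv, mul_one]

end Matrix

theorem Fin.prod_apply_pi_single_zero {R M : Type*} [Zero R] [CommMonoid M] {d : ℕ} [NeZero d]
    (g : R → M) (x : R) :
    ∏ i : Fin d, g ((Pi.single 0 x : Fin d → R) i) = g x * g 0 ^ (d - 1) := by
  obtain ⟨n, rfl⟩ := Nat.exists_eq_succ_of_ne_zero (NeZero.ne d)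
  simp [Fin.prod_univ_succ, Pi.single_apply, Fin.succ_ne_zero]

theorem finProdFinEquiv_val_div {k m : ℕ} (x : Fin k × Fin m) :
    (finProdFinEquiv x : ℕ) / m = x.1 := by
  rw [finProdFinEquiv_apply_val, Nat.add_mul_div_left _ _ x.2.pos, Nat.div_eq_of_lt x.2.isLt,
    zero_add]

section OneRSB

variable {R : Type*} [CommRing R]

/-- The Parisi matrix indexed by (block, position in block): `a = 1 - p₁`, `b = p₁ - p₀`,
`c = p₀`. -/
def oneRSBMatrix (k m : ℕ) (a b c : R) : Matrix (Fin k × Fin m) (Fin k × Fin m) R :=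
  a • 1 + b • (1 ⊗ₖ allOnes (Fin m) R) + c • (allOnes (Fin k) R ⊗ₖ allOnes (Fin m) R)

theorem allOnesEigenbasis_kronecker_mul_oneRSBMatrix (k m : ℕ) [NeZero k] [NeZero m]
    (a b c : R) :
    (allOnesEigenbasis k ⊗ₖ allOnesEigenbasis m) * oneRSBMatrix k m a b c =
      diagonal (fun x : Fin k × Fin m => a + b * allOnesEigenvalues m x.2 +
        c * (allOnesEigenvalues k x.1 * allOnesEigenvalues m x.2)) *
        (allOnesEigenbasis k ⊗ₖ allOnesEigenbasis m) := by
  have hJk := allOnesEigenbasis_mul_allOnes (R := R) k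
  have hJm := allOnesEigenbasis_mul_allOnes (R := R) m
  have hblock := kronecker_mul_kronecker_of_mul_eq
    (Commute.one_right (allOnesEigenbasis (R := R) k)).eq hJm
  have hfull := kronecker_mul_kronecker_of_mul_eq hJk hJm
  have hdiag : diagonal (fun x : Fin k × Fin m => a + b * allOnesEigenvalues m x.2 +
        c * (allOnesEigenvalues k x.1 * allOnesEigenvalues m x.2)) =
      a • 1 + b • (1 ⊗ₖ diagonal (allOnesEigenvalues (R := R) m)) +
        c • (diagonal (allOnesEigenvalues k) ⊗ₖ diagonal (allOnesEigenvalues m)) := by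
    ext ⟨q, r⟩ ⟨q', r'⟩
    by_cases hq : q = q' <;> by_cases hr : r = r' <;> simp [one_apply, hq, hr]
  rw [hdiag, oneRSBMatrix]
  simp only [mul_add, add_mul, Matrix.mul_smul, Matrix.smul_mul, mul_one, one_mul, hblock, hfull]

theorem charpoly_oneRSBMatrix {K : Type*} [Field K] [CharZero K] (k m : ℕ) [NeZero k]
    [NeZero m] (a b c : K) :
    (oneRSBMatrix k m a b c).charpoly =
      (X - C a) ^ (k * m - k) * (X - C (a + m * b)) ^ (k - 1) *
        (X - C (a + m * b + k * m * c)) := by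
  rw [charpoly_eq_of_mul_eq_mul
      (isUnit_kronecker (isUnit_allOnesEigenbasis k) (isUnit_allOnesEigenbasis m))
      (allOnesEigenbasis_kronecker_mul_oneRSBMatrix k m a b c),
    charpoly_diagonal, Fintype.prod_prod_type]
  simp only [allOnesEigenvalues]
  have hprodBlock : ∀ q : Fin k, ∏ r : Fin m, (X - C (a + b * (Pi.single 0 (m : K) : Fin m → K) r +
      c * ((Pi.single 0 (k : K) : Fin k → K) q * (Pi.single 0 (m : K) : Fin m → K) r))) =
      (X - C (a + b * m + c * ((Pi.single 0 (k : K) : Fin k → K) q * m))) * (X - C a) ^ (m - 1) :=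
    fun q => (Fin.prod_apply_pi_single_zero
      (fun y => X - C (a + b * y + c * ((Pi.single 0 (k : K) : Fin k → K) q * y))) (m : K)).trans
      (by simp)
  rw [Finset.prod_congr rfl fun q _ => hprodBlock q, Finset.prod_mul_distrib, Finset.prod_const,
    Finset.card_univ, Fintype.card_fin, Fin.prod_apply_pi_single_zero
      (fun y => X - C (a + b * m + c * (y * m))) (k : K),
    ← pow_mul, Nat.sub_one_mul, mul_comm m k]
  simp only [zero_mul, mul_zero, add_zero]
  rw [mul_comm b, mul_comm c]
  ring

end OneRSB

theorem oneRSB_parisi_spectrum_general (N m₁ : ℕ) (hN : 0 < N) (hdvd : m₁ ∣ N)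
    (p₀ p₁ : ℝ) (P : Matrix (Fin N) (Fin N) ℝ)
    (hP : ∀ i j : Fin N,
      P i j = (if i = j then 1 - p₁ else 0) +
        (if (i : ℕ) / m₁ = (j : ℕ) / m₁ then p₁ - p₀ else 0) + p₀) :
    P.charpoly =
      (X - C (1 - p₁)) ^ (N - N / m₁) *
        (X - C ((1 - p₁) + (m₁ : ℝ) * (p₁ - p₀))) ^ (N / m₁ - 1) *
        (X - C ((1 - p₁) + (m₁ : ℝ) * (p₁ - p₀) + (N : ℝ) * p₀)) := by
  obtain ⟨k, rfl⟩ := hdvd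
  obtain ⟨hm₁, hk⟩ := Nat.mul_ne_zero_iff.mp hN.ne'
  have : NeZero m₁ := ⟨hm₁⟩
  have : NeZero k := ⟨hk⟩
  let e : Fin k × Fin m₁ ≃ Fin (m₁ * k) := finProdFinEquiv.trans (finCongr (mul_comm k m₁))
  have hQ : reindex e.symm e.symm P = oneRSBMatrix k m₁ (1 - p₁) (p₁ - p₀) p₀ := by
    ext x y
    have hsameBlock : (e x : ℕ) / m₁ = (e y : ℕ) / m₁ ↔ x.1 = y.1 := by
      simp only [e, Equiv.trans_apply, finCongr_apply, Fin.val_cast, finProdFinEquiv_val_div,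
        Fin.val_inj]
    simp [oneRSBMatrix, allOnes, hP, hsameBlock, one_apply, kroneckerMap_apply]
  rw [← charpoly_reindex e.symm, hQ, charpoly_oneRSBMatrix,
    Nat.mul_div_cancel_left k (Nat.pos_of_ne_zero hm₁)]
  push_cast
  ring_nf

/-- **Spectrum of the 1-rsb Parisi overlap matrix.**
For `m₁ ∣ N`, the matrix `P = (1 − p₁)·I_N + (p₁ − p₀)·(I_{N/m₁} ⊗ J_{m₁}) + p₀·J_N`
(written entrywise: the `(i,j)` entry is `[i = j]·(1 − p₁) + [⌊i/m₁⌋ = ⌊j/m₁⌋]·(p₁ − p₀) + p₀`)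
has characteristic polynomial
`(X − (1 − p₁))^(N − N/m₁) · (X − ((1 − p₁) + m₁(p₁ − p₀)))^(N/m₁ − 1)
  · (X − ((1 − p₁) + m₁(p₁ − p₀) + N·p₀))`,
i.e. eigenvalue `1 − p₁` with multiplicity `N − N/m₁`, eigenvalue
`(1 − p₁) + m₁(p₁ − p₀)` with multiplicity `N/m₁ − 1`, and eigenvalue
`(1 − p₁) + m₁(p₁ − p₀) + N·p₀` with multiplicity `1`. -/
theorem oneRSB_parisi_spectrum (N m₁ : ℕ) (hN : 0 < N) (hm₁ : 0 < m₁) (hdvd : m₁ ∣ N)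
    (p₀ p₁ : ℝ) (P : Matrix (Fin N) (Fin N) ℝ)
    (hP : ∀ i j : Fin N,
      P i j = (if i = j then 1 - p₁ else 0) +
        (if (i : ℕ) / m₁ = (j : ℕ) / m₁ then p₁ - p₀ else 0) + p₀) :
    P.charpoly =
      (X - C (1 - p₁)) ^ (N - N / m₁) *
        (X - C ((1 - p₁) + (m₁ : ℝ) * (p₁ - p₀))) ^ (N / m₁ - 1) *
        (X - C ((1 - p₁) + (m₁ : ℝ) * (p₁ - p₀) + (N : ℝ) * p₀)) :=
  oneRSB_parisi_spectrum_general N m₁ hN hdvd p₀ p₁ P hP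
end

section
/- Let N, m₁, m₂ be positive integers with m₂ dividing m₁ and m₁ dividing N, and let p₀, p₁, p₂ ∈ ℝ. Let P = (1−p₂)·I_N + (p₂−p₁)·(I_{N/m₂} ⊗ J_{m₂}) + (p₁−p₀)·(I_{N/m₁} ⊗ J_{m₁}) + p₀·J_N. Then P has eigenvalue 1−p₂ with multiplicity N − N/m₂, eigenvalue (1−p₂) + m₂(p₂−p₁) with multiplicity N/m₂ − N/m₁, eigenvalue (1−p₂) + m₂(p₂−p₁) + m₁(p₁−p₀) with multiplicity N/m₁ − 1, and eigenvalue (1−p₂) + m₂(p₂−p₁) + m₁(p₁−p₀) + N·p₀ with multiplicity 1. -/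
/-!
Write `J` for an all-ones matrix. After relabelling `Fin N ≃ (Fin (N/m₁) × Fin (m₁/m₂)) × Fin m₂`,
`P` becomes `a • 1 + (b • 1 + (c • 1 + d • J) ⊗ J) ⊗ J`. Conjugating by `1 ⊗ V`, where the columns
of `V` are `𝟙` and `e_j - e_0`, turns `J_n` into `diag(n, 0, …, 0)`, so `a • 1 + B ⊗ J_n` becomes
block diagonal with one block `a • 1 + n • B` and `n - 1` blocks `a • 1`. Peeling off the three
levels of nesting this way produces the four eigenvalues with their multiplicities.
-/

open Polynomial Matrix Kronecker

namespace Matrix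

section CommRing

variable {R : Type*} [CommRing R] {m : Type*} [Fintype m] [DecidableEq m]

theorem charpoly_eq_of_mul_eq_mul_of_mul_eq_one {A D U W : Matrix m m R} (hAU : A * U = U * D)
    (hWU : W * U = 1) : A.charpoly = D.charpoly := by
  have hUW : U * W = 1 := mul_eq_one_comm.mp hWU
  calc A.charpoly = (U * (D * W)).charpoly := by
        rw [← Matrix.mul_assoc, ← hAU, Matrix.mul_assoc, hUW, Matrix.mul_one]
    _ = (D * W * U).charpoly := charpoly_mul_comm _ _
    _ = D.charpoly := by rw [Matrix.mul_assoc, hWU, Matrix.mul_one]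

theorem charpoly_blockDiagonal {o : Type*} [Fintype o] [DecidableEq o] (M : o → Matrix m m R) :
    (blockDiagonal M).charpoly = ∏ k, (M k).charpoly := by
  have : (blockDiagonal M).charmatrix = blockDiagonal fun k => (M k).charmatrix := by
    ext ⟨i, k⟩ ⟨j, k'⟩
    by_cases hk : k = k' <;> by_cases hij : i = j <;> simp [blockDiagonal_apply, hk, hij]
  rw [charpoly, this, det_blockDiagonal]
  rfl

theorem charpoly_smul_one (a : R) :
    (a • (1 : Matrix m m R)).charpoly = (X - C a) ^ Fintype.card m := by
  rw [← diagonal_one, ← diagonal_smul, charpoly_diagonal]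
  simp

end CommRing

section AllOnes

variable {K : Type*} [Field K] (n : ℕ) [NeZero n]

def onesEigenbasis : Matrix (Fin n) (Fin n) K :=
  of fun x j => if j = 0 then 1 else (if x = j then 1 else 0) - if x = 0 then 1 else 0

def onesEigenbasisInv : Matrix (Fin n) (Fin n) K :=
  of fun j y => if j = 0 then (n : K)⁻¹ else (if j = y then 1 else 0) - (n : K)⁻¹

theorem of_one_mul_onesEigenbasis :
    of 1 * onesEigenbasis n = onesEigenbasis n * diagonal (Pi.single 0 (n : K)) := by
  ext x j
  rw [mul_diagonal, mul_apply]
  by_cases hj : j = 0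
  · subst hj
    simp [onesEigenbasis]
  · simp [onesEigenbasis, hj, Finset.sum_sub_distrib]

theorem onesEigenbasisInv_mul_onesEigenbasis [CharZero K] :
    onesEigenbasisInv n * onesEigenbasis n = (1 : Matrix (Fin n) (Fin n) K) := by
  have hn : (n : K) ≠ 0 := Nat.cast_ne_zero.mpr (NeZero.ne n)
  ext j l
  rw [mul_apply]
  by_cases hj : j = 0 <;> by_cases hl : l = 0
  · subst hj hl
    simp [onesEigenbasis, onesEigenbasisInv, hn]
  · subst hj
    simp [onesEigenbasis, onesEigenbasisInv, hl, Ne.symm hl, mul_sub, Finset.sum_sub_distrib]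
  · subst hl
    simp [onesEigenbasis, onesEigenbasisInv, hj, hn]
  · simp [onesEigenbasis, onesEigenbasisInv, hj, hl, mul_sub, Finset.sum_sub_distrib, one_apply]

theorem charpoly_smul_one_add_kronecker_of_one [CharZero K] {ι : Type*} [Fintype ι]
    [DecidableEq ι] (a : K) (B : Matrix ι ι K) :
    (a • 1 + B ⊗ₖ of 1 : Matrix (ι × Fin n) (ι × Fin n) K).charpoly =
      (X - C a) ^ (Fintype.card ι * (n - 1)) * (a • 1 + (n : K) • B).charpoly := by
  have hconj : (a • 1 + B ⊗ₖ of 1) * ((1 : Matrix ι ι K) ⊗ₖ onesEigenbasis n) =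
      ((1 : Matrix ι ι K) ⊗ₖ onesEigenbasis n) * (a • 1 + B ⊗ₖ diagonal (Pi.single 0 (n : K))) := by
    rw [Matrix.add_mul, Matrix.mul_add, smul_mul_assoc, mul_smul_comm, Matrix.one_mul,
      Matrix.mul_one, ← mul_kronecker_mul, ← mul_kronecker_mul, of_one_mul_onesEigenbasis,
      Matrix.mul_one, Matrix.one_mul]
  have hinv : ((1 : Matrix ι ι K) ⊗ₖ onesEigenbasisInv n) *
      ((1 : Matrix ι ι K) ⊗ₖ onesEigenbasis n) = 1 := by
    rw [← mul_kronecker_mul, onesEigenbasisInv_mul_onesEigenbasis, Matrix.one_mul,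
      one_kronecker_one]
  have hblock : a • 1 + B ⊗ₖ diagonal (Pi.single 0 (n : K)) =
      blockDiagonal fun j => a • 1 + (Pi.single 0 (n : K) : Fin n → K) j • B := by
    rw [kronecker_diagonal, ← blockDiagonal_one, ← blockDiagonal_smul, ← blockDiagonal_add]
    congr 1
    ext j : 1
    simp [op_smul_eq_smul]
  have hblock_ne : ∀ j ∈ ({0}ᶜ : Finset (Fin n)),
      (a • 1 + (Pi.single 0 (n : K) : Fin n → K) j • B).charpoly = (X - C a) ^ Fintype.card ι := by
    intro j hj
    rw [Finset.mem_compl, Finset.mem_singleton] at hj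
    rw [Pi.single_eq_of_ne hj, zero_smul, add_zero, charpoly_smul_one]
  rw [charpoly_eq_of_mul_eq_mul_of_mul_eq_one hconj hinv, hblock, charpoly_blockDiagonal,
    Fintype.prod_eq_mul_prod_compl 0, Finset.prod_congr rfl hblock_ne, Finset.prod_const,
    Finset.card_compl, Finset.card_singleton, Fintype.card_fin, Pi.single_eq_same, pow_mul,
    mul_comm]

theorem charpoly_smul_one_add_smul_of_one [CharZero K] (a b : K) :
    (a • 1 + b • of 1 : Matrix (Fin n) (Fin n) K).charpoly =
      (X - C a) ^ (n - 1) * (X - C (a + n * b)) := by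
  have h := charpoly_smul_one_add_kronecker_of_one n a (b • 1 : Matrix Unit Unit K)
  have hreindex : reindex (Equiv.punitProd (Fin n)) (Equiv.punitProd (Fin n))
      (a • 1 + (b • 1 : Matrix Unit Unit K) ⊗ₖ of 1) = a • 1 + b • of 1 := by
    ext i j
    simp [one_apply]
  rw [← charpoly_reindex (Equiv.punitProd (Fin n)), hreindex, smul_smul, ← add_smul,
    charpoly_smul_one] at h
  simpa using h

end AllOnes

end Matrix

section TwoRSB

variable {K : Type*} [Field K]

/-- The 2-rsb Parisi matrix in the coordinates `((m₁-block, m₂-block inside it), position)`. -/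
def twoRSBBlockMatrix {ι κ μ : Type*} [DecidableEq ι] [DecidableEq κ] [DecidableEq μ]
    (a b c d : K) : Matrix ((ι × κ) × μ) ((ι × κ) × μ) K :=
  a • 1 + (b • 1 + (c • 1 + d • of 1) ⊗ₖ of 1) ⊗ₖ of 1

theorem twoRSBBlockMatrix_apply {ι κ μ : Type*} [DecidableEq ι] [DecidableEq κ] [DecidableEq μ]
    (a b c d : K) (x y : (ι × κ) × μ) :
    twoRSBBlockMatrix a b c d x y =
      (if x = y then a else 0) + (if x.1 = y.1 then b else 0) +
        (if x.1.1 = y.1.1 then c else 0) + d := by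
  obtain ⟨⟨i, j⟩, l⟩ := x
  obtain ⟨⟨i', j'⟩, l'⟩ := y
  simp only [twoRSBBlockMatrix, Matrix.add_apply, Matrix.smul_apply, kroneckerMap_apply,
    one_apply, of_apply, Pi.one_apply, Prod.mk.injEq, smul_eq_mul]
  split_ifs <;> simp_all [add_assoc]

theorem charpoly_twoRSBBlockMatrix [CharZero K] (k r m : ℕ) [NeZero k] [NeZero r] [NeZero m]
    (a b c d : K) :
    (twoRSBBlockMatrix a b c d : Matrix ((Fin k × Fin r) × Fin m) _ K).charpoly =
      (X - C a) ^ (k * r * (m - 1)) * (X - C (a + m * b)) ^ (k * (r - 1)) *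
        (X - C (a + m * b + m * r * c)) ^ (k - 1) *
        (X - C (a + m * b + m * r * c + m * r * k * d)) := by
  have hlevel₂ : a • 1 + (m : K) • (b • 1 + (c • 1 + d • of 1 : Matrix (Fin k) (Fin k) K) ⊗ₖ of 1)
      = (a + m * b) • 1 + ((m : K) • (c • 1 + d • of 1 : Matrix (Fin k) (Fin k) K)) ⊗ₖ
        (of 1 : Matrix (Fin r) (Fin r) K) := by
    rw [smul_add, smul_smul, ← add_assoc, ← add_smul, smul_kronecker]
  have hlevel₁ : (a + m * b) • 1 + (r : K) • (m : K) • (c • 1 + d • of 1 : Matrix (Fin k) (Fin k) K)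
      = (a + m * b + m * r * c) • 1 + (m * r * d) • of 1 := by
    module
  rw [twoRSBBlockMatrix, charpoly_smul_one_add_kronecker_of_one, hlevel₂,
    charpoly_smul_one_add_kronecker_of_one, hlevel₁, charpoly_smul_one_add_smul_of_one]
  simp only [Fintype.card_prod, Fintype.card_fin]
  ring_nf

end TwoRSB

section FinBlockEquiv

def finBlockEquiv (k r m : ℕ) : Fin (m * r * k) ≃ (Fin k × Fin r) × Fin m :=
  (finCongr (by ring)).trans
    (finProdFinEquiv.symm.trans (Equiv.prodCongr finProdFinEquiv.symm (Equiv.refl _)))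

theorem finProdFinEquiv_symm_fst_eq_iff {k m : ℕ} (i j : Fin (k * m)) :
    (finProdFinEquiv.symm i).1 = (finProdFinEquiv.symm j).1 ↔ (i : ℕ) / m = j / m := by
  simp [finProdFinEquiv_symm_apply, Fin.ext_iff, Fin.coe_divNat]

variable {k r m : ℕ} (i j : Fin (m * r * k))

theorem finBlockEquiv_fst_eq_iff :
    (finBlockEquiv k r m i).1 = (finBlockEquiv k r m j).1 ↔ (i : ℕ) / m = j / m := by
  simp only [finBlockEquiv, Equiv.trans_apply, Equiv.prodCongr_apply, Prod.map_fst,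
    finProdFinEquiv.symm.injective.eq_iff, finProdFinEquiv_symm_fst_eq_iff, finCongr_apply,
    Fin.val_cast]

theorem finBlockEquiv_fst_fst_eq_iff :
    (finBlockEquiv k r m i).1.1 = (finBlockEquiv k r m j).1.1 ↔
      (i : ℕ) / (m * r) = j / (m * r) := by
  simp only [finBlockEquiv, Equiv.trans_apply, Equiv.prodCongr_apply, Prod.map_fst,
    finProdFinEquiv_symm_apply, Fin.ext_iff, Fin.coe_divNat, finCongr_apply, Fin.val_cast,
    Nat.div_div_eq_div_mul]

theorem twoRSBBlockMatrix_apply_finBlockEquiv {K : Type*} [Field K] (a b c d : K) :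
    twoRSBBlockMatrix a b c d (finBlockEquiv k r m i) (finBlockEquiv k r m j) =
      (if i = j then a else 0) + (if (i : ℕ) / m = j / m then b else 0) +
        (if (i : ℕ) / (m * r) = j / (m * r) then c else 0) + d := by
  simp only [twoRSBBlockMatrix_apply, EmbeddingLike.apply_eq_iff_eq, finBlockEquiv_fst_eq_iff,
    finBlockEquiv_fst_fst_eq_iff]

end FinBlockEquiv

theorem twoRSB_parisi_spectrum_general (N m₁ m₂ : ℕ) (hN : 0 < N)
    (hdvd₂ : m₂ ∣ m₁) (hdvd₁ : m₁ ∣ N) (p₀ p₁ p₂ : ℝ) (P : Matrix (Fin N) (Fin N) ℝ)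
    (hP : ∀ i j : Fin N,
      P i j = (if i = j then 1 - p₂ else 0) +
        (if (i : ℕ) / m₂ = (j : ℕ) / m₂ then p₂ - p₁ else 0) +
        (if (i : ℕ) / m₁ = (j : ℕ) / m₁ then p₁ - p₀ else 0) + p₀) :
    P.charpoly =
      (X - C (1 - p₂)) ^ (N - N / m₂) *
        (X - C ((1 - p₂) + (m₂ : ℝ) * (p₂ - p₁))) ^ (N / m₂ - N / m₁) *
        (X - C ((1 - p₂) + (m₂ : ℝ) * (p₂ - p₁) + (m₁ : ℝ) * (p₁ - p₀))) ^ (N / m₁ - 1) *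
        (X - C ((1 - p₂) + (m₂ : ℝ) * (p₂ - p₁) + (m₁ : ℝ) * (p₁ - p₀) + (N : ℝ) * p₀)) := by
  obtain ⟨r, rfl⟩ := hdvd₂
  obtain ⟨k, rfl⟩ := hdvd₁
  obtain ⟨⟨hm, hr⟩, hk⟩ : (m₂ ≠ 0 ∧ r ≠ 0) ∧ k ≠ 0 := by simpa using hN.ne'
  have : NeZero m₂ := ⟨hm⟩
  have : NeZero r := ⟨hr⟩
  have : NeZero k := ⟨hk⟩
  have hPe : P = reindex (finBlockEquiv k r m₂).symm (finBlockEquiv k r m₂).symm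
      (twoRSBBlockMatrix (1 - p₂) (p₂ - p₁) (p₁ - p₀) p₀) := by
    ext i j
    rw [hP, reindex_apply, submatrix_apply, Equiv.symm_symm, twoRSBBlockMatrix_apply_finBlockEquiv]
  have hdiv₂ : m₂ * r * k / m₂ = r * k := by
    rw [mul_assoc, Nat.mul_div_cancel_left _ (Nat.pos_of_ne_zero hm)]
  have hdiv₁ : m₂ * r * k / (m₂ * r) = k :=
    Nat.mul_div_cancel_left _ (Nat.pos_of_ne_zero (mul_ne_zero hm hr))
  have hexp₂ : m₂ * r * k - r * k = k * r * (m₂ - 1) := by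
    rw [Nat.mul_sub_one]; ring_nf
  have hexp₁ : r * k - k = k * (r - 1) := by
    rw [Nat.mul_sub_one]; ring_nf
  rw [hPe, charpoly_reindex, charpoly_twoRSBBlockMatrix, hdiv₂, hdiv₁, hexp₂, hexp₁]
  push_cast
  ring

/-- **Spectrum of the 2-rsb Parisi overlap matrix.**
For `m₂ ∣ m₁ ∣ N`, the matrix
`P = (1 − p₂)·I_N + (p₂ − p₁)·(I_{N/m₂} ⊗ J_{m₂}) + (p₁ − p₀)·(I_{N/m₁} ⊗ J_{m₁}) + p₀·J_N`
has eigenvalue `1 − p₂` with multiplicity `N − N/m₂`, eigenvalue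
`(1 − p₂) + m₂(p₂ − p₁)` with multiplicity `N/m₂ − N/m₁`, eigenvalue
`(1 − p₂) + m₂(p₂ − p₁) + m₁(p₁ − p₀)` with multiplicity `N/m₁ − 1`, and eigenvalue
`(1 − p₂) + m₂(p₂ − p₁) + m₁(p₁ − p₀) + N·p₀` with multiplicity `1`;
equivalently its characteristic polynomial factors accordingly. -/
theorem twoRSB_parisi_spectrum (N m₁ m₂ : ℕ) (hN : 0 < N) (hm₁ : 0 < m₁) (hm₂ : 0 < m₂)
    (hdvd₂ : m₂ ∣ m₁) (hdvd₁ : m₁ ∣ N) (p₀ p₁ p₂ : ℝ) (P : Matrix (Fin N) (Fin N) ℝ)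
    (hP : ∀ i j : Fin N,
      P i j = (if i = j then 1 - p₂ else 0) +
        (if (i : ℕ) / m₂ = (j : ℕ) / m₂ then p₂ - p₁ else 0) +
        (if (i : ℕ) / m₁ = (j : ℕ) / m₁ then p₁ - p₀ else 0) + p₀) :
    P.charpoly =
      (X - C (1 - p₂)) ^ (N - N / m₂) *
        (X - C ((1 - p₂) + (m₂ : ℝ) * (p₂ - p₁))) ^ (N / m₂ - N / m₁) *
        (X - C ((1 - p₂) + (m₂ : ℝ) * (p₂ - p₁) + (m₁ : ℝ) * (p₁ - p₀))) ^ (N / m₁ - 1) *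
        (X - C ((1 - p₂) + (m₂ : ℝ) * (p₂ - p₁) + (m₁ : ℝ) * (p₁ - p₀) + (N : ℝ) * p₀)) :=
  twoRSB_parisi_spectrum_general N m₁ m₂ hN hdvd₂ hdvd₁ p₀ p₁ p₂ P hP
end

section
/- Let r ≥ 1 and let N, m₁, …, m_r be positive integers with m_r | m_{r−1} | ⋯ | m₁ | N, and let p₀, p₁, …, p_r ∈ ℝ. Set m₀ := N. Let P = (1−p_r)·I_N + Σ_{k=1}^{r} (p_k − p_{k−1})·(I_{N/m_k} ⊗ J_{m_k}) + p₀·J_N. Then the spectrum of P, counted with multiplicity, is: the eigenvalue 1 − p_r with multiplicity N − N/m_r; for each j ∈ {1, …, r}, the eigenvalue (1 − p_r) + Σ_{k=j}^{r} m_k(p_k − p_{k−1}) with multiplicity N/m_j − N/m_{j−1}; and the eigenvalue (1 − p_r) + Σ_{k=1}^{r} m_k(p_k − p_{k−1}) + N·p₀ with multiplicity 1. -/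
/-!
Let `E_k` be the orthogonal projection onto the vectors that are constant on the blocks of size
`m_k`, i.e. `m_k⁻¹ • (I_{N/m_k} ⊗ J_{m_k})`, with `m_{r+1} = 1` so that `E_{r+1} = 1`. Because
the block sizes form a divisibility chain, `E_k * E_l = E_{min k l}`, hence the differences
`F_j = E_j - E_{j-1}` (with `E_{-1} = 0`) are complete orthogonal idempotents, and
`rank F_j = tr F_j = N / m_j - N / m_{j-1}`. With `p_{-1} = 0` and `p_{r+1} = 1` we have
`P = ∑_k m_k (p_k - p_{k-1}) E_k`, which summation by parts turns into `∑_j λ_j F_j` with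
`λ_j = ∑_{k ≥ j} m_k (p_k - p_{k-1})`. In a basis adapted to the ranges of the `F_j` such a
matrix is diagonal, with `λ_j` repeated `rank F_j` times.
-/

open Polynomial Finset
open scoped Matrix

namespace CompleteOrthogonalIdempotents

open LinearMap Module

theorem isInternal_range {R M ι : Type*} [Ring R] [AddCommGroup M] [Module R M] [Fintype ι]
    [DecidableEq ι] {e : ι → Module.End R M} (he : CompleteOrthogonalIdempotents e) :
    DirectSum.IsInternal fun i ↦ range (e i) := by
  rw [DirectSum.isInternal_submodule_iff_iSupIndep_and_iSup_eq_top]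
  refine ⟨iSupIndep_def.2 fun i ↦ ?_, eq_top_iff.2 fun x _ ↦ ?_⟩
  · have hker : ⨆ j, ⨆ (_ : j ≠ i), range (e j) ≤ ker (e i) :=
      iSup₂_le fun j hji ↦ range_le_ker_iff.2 (he.ortho hji.symm)
    exact (he.idem i).isCompl.disjoint.mono_right hker
  · have hx : ∑ i, e i x = x := by simpa using congr($(he.complete) x)
    rw [← hx]
    exact Submodule.sum_mem _ fun i _ ↦ Submodule.mem_iSup_of_mem i (mem_range_self _ _)

theorem charpoly_sum_smul {K V ι : Type*} [Field K] [AddCommGroup V] [Module K V]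
    [FiniteDimensional K V] [Fintype ι] [DecidableEq ι] {e : ι → Module.End K V}
    (he : CompleteOrthogonalIdempotents e) (c : ι → K) :
    (∑ i, c i • e i).charpoly = ∏ i, (X - C (c i)) ^ finrank K (range (e i)) := by
  set b := he.isInternal_range.collectedBasis fun i ↦ Module.finBasis K (range (e i))
  have hb : ∀ a, (∑ i, c i • e i) (b a) = c a.1 • b a := by
    intro a
    obtain ⟨y, hy⟩ := he.isInternal_range.collectedBasis_mem _ a
    rw [← hy, ← Module.End.mul_apply, sum_mul]
    simp [he.mul_eq]
  have hdiag : toMatrix b b (∑ i, c i • e i) = Matrix.diagonal fun a ↦ c a.1 := by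
    ext a a'
    rw [toMatrix_apply, hb, map_smul, b.repr_self]
    rcases eq_or_ne a' a with rfl | h
    · simp
    · simp [h.symm]
  rw [← charpoly_toMatrix _ b, hdiag, Matrix.charpoly_diagonal, Fintype.prod_sigma]
  simp

theorem matrix_charpoly_sum_smul {K n ι : Type*} [Field K] [Fintype n] [DecidableEq n]
    [Fintype ι] [DecidableEq ι] {e : ι → Matrix n n K}
    (he : CompleteOrthogonalIdempotents e) (c : ι → K) :
    (∑ i, c i • e i).charpoly = ∏ i, (X - C (c i)) ^ (e i).rank := by
  rw [← Matrix.charpoly_toLin', map_sum]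
  simp_rw [map_smul]
  exact (he.map (Matrix.toLinAlgEquiv' : Matrix n n K ≃ₐ[K] _).toRingHom).charpoly_sum_smul c

end CompleteOrthogonalIdempotents

theorem Matrix.trace_eq_rank_of_isIdempotentElem {K n : Type*} [Field K] [Fintype n]
    [DecidableEq n] {A : Matrix n n K} (hA : IsIdempotentElem A) : A.trace = A.rank := by
  have hidem : IsIdempotentElem (Matrix.toLin' A) := hA.map Matrix.toLinAlgEquiv'
  rw [← Matrix.trace_toLin'_eq, (LinearMap.IsIdempotentElem.isProj_range _ hidem).trace]
  rfl

theorem OrthogonalIdempotents.sub_of_chain {R : Type*} [Ring R] {G : ℕ → R}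
    (hG : ∀ i j, G i * G j = G (min i j)) :
    OrthogonalIdempotents fun k : ℕ ↦ G (k + 1) - G k := by
  have hprod : ∀ k l : ℕ, (G (k + 1) - G k) * (G (l + 1) - G l) =
      G (min (k + 1) (l + 1)) - G (min k (l + 1)) - (G (min (k + 1) l) - G (min k l)) := by
    intro k l
    simp only [sub_mul, mul_sub, hG]
  refine ⟨fun k ↦ ?_, fun k l hkl ↦ ?_⟩
  · rw [IsIdempotentElem, hprod, min_self, min_self, min_eq_right k.le_succ,
      min_eq_left k.le_succ]
    abel
  · change (G (k + 1) - G k) * (G (l + 1) - G l) = 0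
    rw [hprod]
    rcases lt_or_gt_of_ne hkl with h | h
    · rw [min_eq_left (by omega), min_eq_left (by omega), min_eq_left (by omega),
        min_eq_left (by omega)]
      abel
    · rw [min_eq_right (by omega), min_eq_right (by omega), min_eq_right (by omega),
        min_eq_right (by omega)]
      abel

theorem CompleteOrthogonalIdempotents.sub_of_chain {R : Type*} [Ring R] {G : ℕ → R} {n : ℕ}
    (hG : ∀ i j, G i * G j = G (min i j)) (h0 : G 0 = 0) (hn : G n = 1) :
    CompleteOrthogonalIdempotents fun k : Fin n ↦ G (k + 1) - G k where
  toOrthogonalIdempotents := (OrthogonalIdempotents.sub_of_chain hG).embedding Fin.valEmbedding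
  complete := by
    rw [Fin.sum_univ_eq_sum_range (fun k ↦ G (k + 1) - G k), sum_range_sub, hn, h0, sub_zero]

@[to_additive]
theorem Finset.prod_range_add_two_eq_mul_prod_Icc_mul {M : Type*} [CommMonoid M] (f : ℕ → M)
    (r : ℕ) : ∏ k ∈ range (r + 2), f k = f 0 * (∏ k ∈ Icc 1 r, f k) * f (r + 1) := by
  rw [prod_range_succ, range_eq_Ico, prod_eq_prod_Ico_succ_bot (by omega),
    Ico_add_one_right_eq_Icc]

theorem Finset.sum_range_smul_eq_sum_range_sum_Ico_smul_sub {R M : Type*} [Semiring R]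
    [AddCommGroup M] [Module R M] (a : ℕ → R) {G : ℕ → M} (h0 : G 0 = 0) (n : ℕ) :
    ∑ k ∈ range n, a k • G (k + 1) =
      ∑ j ∈ range n, (∑ k ∈ Ico j n, a k) • (G (j + 1) - G j) := by
  calc ∑ k ∈ range n, a k • G (k + 1)
      = ∑ k ∈ Ico 0 n, ∑ j ∈ Ico 0 (k + 1), a k • (G (j + 1) - G j) := by
        rw [range_eq_Ico]
        refine sum_congr rfl fun k _ ↦ ?_
        rw [← smul_sum, ← range_eq_Ico, sum_range_sub, h0, sub_zero]
    _ = ∑ j ∈ Ico 0 n, ∑ k ∈ Ico j n, a k • (G (j + 1) - G j) :=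
        (sum_Ico_Ico_comm 0 n fun j k ↦ a k • (G (j + 1) - G j)).symm
    _ = _ := by simp_rw [range_eq_Ico, sum_smul]

theorem Nat.card_filter_range_div_eq {N c q : ℕ} (hc : 0 < c) (hcN : c ∣ N) (hq : q < N / c) :
    #{t ∈ range N | t / c = q} = c := by
  have hqN : q * c + c ≤ N := by
    have := Nat.mul_le_mul_right c hq
    rwa [Nat.div_mul_cancel hcN, Nat.succ_mul] at this
  have hblock : {t ∈ range N | t / c = q} = Ico (q * c) (q * c + c) := by
    ext t
    simp only [mem_filter, mem_range, mem_Ico, Nat.div_eq_iff hc]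
    omega
  rw [hblock, Nat.card_Ico]
  omega

/-- `I_{N/d} ⊗ J_d`: indices `i, j < N` lie in the same block iff `i / d = j / d`. -/
def blockOnes (N d : ℕ) : Matrix (Fin N) (Fin N) ℝ :=
  Matrix.of fun i j ↦ if (i : ℕ) / d = (j : ℕ) / d then 1 else 0

noncomputable def blockAverage (N d : ℕ) : Matrix (Fin N) (Fin N) ℝ :=
  (d : ℝ)⁻¹ • blockOnes N d

section Blocks

variable {N : ℕ}

theorem blockOnes_transpose (d : ℕ) : (blockOnes N d)ᵀ = blockOnes N d := by
  ext i j
  simp [blockOnes, eq_comm]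

theorem blockOnes_mul_blockOnes {a c : ℕ} (hc : 0 < c) (hca : c ∣ a) (haN : a ∣ N) :
    blockOnes N a * blockOnes N c = (c : ℝ) • blockOnes N a := by
  ext i j
  have hcoarse : ∀ t : Fin N, (t : ℕ) / c = (j : ℕ) / c → (t : ℕ) / a = (j : ℕ) / a := by
    obtain ⟨e, rfl⟩ := hca
    intro t ht
    rw [← Nat.div_div_eq_div_mul, ← Nat.div_div_eq_div_mul, ht]
  have hcount : ∑ t : Fin N, (if (t : ℕ) / c = (j : ℕ) / c then 1 else 0 : ℝ) = c := by
    rw [Fin.sum_univ_eq_sum_range (fun t ↦ if t / c = (j : ℕ) / c then (1 : ℝ) else 0), sum_boole,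
      Nat.card_filter_range_div_eq hc (hca.trans haN)
        (Nat.div_lt_div_of_lt_of_dvd (hca.trans haN) j.2)]
  calc (blockOnes N a * blockOnes N c) i j
      = ∑ t : Fin N, (if (i : ℕ) / a = (j : ℕ) / a then (1 : ℝ) else 0) *
          (if (t : ℕ) / c = (j : ℕ) / c then 1 else 0) := by
        rw [Matrix.mul_apply]
        refine sum_congr rfl fun t _ ↦ ?_
        by_cases ht : (t : ℕ) / c = (j : ℕ) / c
        · simp [blockOnes, ht, hcoarse t ht]
        · simp [blockOnes, ht]
    _ = ((c : ℝ) • blockOnes N a) i j := by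
        rw [← mul_sum, hcount]
        simp [blockOnes, mul_comm]

theorem blockAverage_mul_blockAverage {a c : ℕ} (hc : 0 < c) (hca : c ∣ a) (haN : a ∣ N) :
    blockAverage N a * blockAverage N c = blockAverage N a := by
  rw [blockAverage, blockAverage, Matrix.smul_mul, Matrix.mul_smul,
    blockOnes_mul_blockOnes hc hca haN, smul_smul, smul_smul, inv_mul_cancel_right₀ (by positivity)]

theorem blockAverage_transpose (d : ℕ) : (blockAverage N d)ᵀ = blockAverage N d := by
  rw [blockAverage, Matrix.transpose_smul, blockOnes_transpose]

theorem blockAverage_mul_blockAverage' {a c : ℕ} (hc : 0 < c) (hca : c ∣ a) (haN : a ∣ N) :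
    blockAverage N c * blockAverage N a = blockAverage N a := by
  rw [← blockAverage_transpose a, ← blockAverage_transpose c, ← Matrix.transpose_mul,
    blockAverage_mul_blockAverage hc hca haN]

theorem trace_blockAverage (d : ℕ) : (blockAverage N d).trace = N / d := by
  simp [blockAverage, blockOnes, Matrix.trace, div_eq_mul_inv]

theorem blockAverage_one : blockAverage N 1 = 1 := by
  ext i j
  simp [blockAverage, blockOnes, Matrix.one_apply, Fin.val_inj]

theorem smul_blockAverage {d : ℕ} (hd : d ≠ 0) (s : ℝ) :
    ((d : ℝ) * s) • blockAverage N d = s • blockOnes N d := by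
  rw [blockAverage, smul_smul, mul_right_comm, mul_inv_cancel₀ (by exact_mod_cast hd), one_mul]

end Blocks

def parisiBlockSize (r : ℕ) (m : ℕ → ℕ) (k : ℕ) : ℕ := if k ≤ r then m k else 1

/-- The jumps of the sequence `0, p₀, p₁, …, p_r, 1`. -/
def parisiStep (r : ℕ) (p : ℕ → ℝ) (k : ℕ) : ℝ :=
  if k = 0 then p 0 else if k ≤ r then p k - p (k - 1) else 1 - p r

def parisiWeight (r : ℕ) (m : ℕ → ℕ) (p : ℕ → ℝ) (k : ℕ) : ℝ :=
  parisiBlockSize r m k * parisiStep r p k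

def parisiEigenvalue (r : ℕ) (m : ℕ → ℕ) (p : ℕ → ℝ) (j : ℕ) : ℝ :=
  ∑ k ∈ Ico j (r + 2), parisiWeight r m p k

def parisiMatrix (N r : ℕ) (m : ℕ → ℕ) (p : ℕ → ℝ) : Matrix (Fin N) (Fin N) ℝ :=
  Matrix.of fun i j ↦ (if i = j then 1 - p r else 0) +
    (∑ k ∈ Icc 1 r, (p k - p (k - 1)) * (if (i : ℕ) / m k = (j : ℕ) / m k then 1 else 0)) + p 0

noncomputable def parisiChain (N r : ℕ) (m : ℕ → ℕ) : ℕ → Matrix (Fin N) (Fin N) ℝ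
  | 0 => 0
  | k + 1 => blockAverage N (parisiBlockSize r m k)

section Parisi

variable {r N : ℕ} {m : ℕ → ℕ}

theorem parisiBlockSize_of_le {k : ℕ} (hk : k ≤ r) : parisiBlockSize r m k = m k := if_pos hk

theorem parisiBlockSize_succ_self : parisiBlockSize r m (r + 1) = 1 := if_neg (by omega)

theorem parisiBlockSize_pos (hmpos : ∀ k ≤ r, 0 < m k) (k : ℕ) : 0 < parisiBlockSize r m k := by
  unfold parisiBlockSize
  split_ifs with hk
  exacts [hmpos k hk, one_pos]

theorem parisiBlockSize_dvd_of_le (hchain : ∀ k ∈ Icc 1 r, m k ∣ m (k - 1)) {k l : ℕ}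
    (hkl : k ≤ l) : parisiBlockSize r m l ∣ parisiBlockSize r m k := by
  induction l, hkl using Nat.le_induction with
  | base => rfl
  | succ l _ ih =>
    refine dvd_trans ?_ ih
    unfold parisiBlockSize
    split_ifs with h1 h2
    · simpa using hchain (l + 1) (mem_Icc.2 ⟨by omega, h1⟩)
    · omega
    · exact one_dvd _
    · exact one_dvd _

theorem parisiBlockSize_dvd (hm0 : m 0 = N) (hchain : ∀ k ∈ Icc 1 r, m k ∣ m (k - 1)) (k : ℕ) :
    parisiBlockSize r m k ∣ N := by
  simpa [parisiBlockSize, hm0] using parisiBlockSize_dvd_of_le hchain (Nat.zero_le k)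

theorem parisiChain_mul (hm0 : m 0 = N) (hmpos : ∀ k ≤ r, 0 < m k)
    (hchain : ∀ k ∈ Icc 1 r, m k ∣ m (k - 1)) (i j : ℕ) :
    parisiChain N r m i * parisiChain N r m j = parisiChain N r m (min i j) := by
  cases i with
  | zero => simp [parisiChain]
  | succ a =>
  cases j with
  | zero => simp [parisiChain]
  | succ b =>
  rcases le_total a b with hab | hba
  · rw [min_eq_left (by omega)]
    exact blockAverage_mul_blockAverage (parisiBlockSize_pos hmpos b)
      (parisiBlockSize_dvd_of_le hchain hab) (parisiBlockSize_dvd hm0 hchain a)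
  · rw [min_eq_right (by omega)]
    exact blockAverage_mul_blockAverage' (parisiBlockSize_pos hmpos a)
      (parisiBlockSize_dvd_of_le hchain hba) (parisiBlockSize_dvd hm0 hchain b)

theorem completeOrthogonalIdempotents_parisiChain (hm0 : m 0 = N) (hmpos : ∀ k ≤ r, 0 < m k)
    (hchain : ∀ k ∈ Icc 1 r, m k ∣ m (k - 1)) :
    CompleteOrthogonalIdempotents fun k : Fin (r + 2) ↦
      parisiChain N r m (k + 1) - parisiChain N r m k :=
  .sub_of_chain (parisiChain_mul hm0 hmpos hchain) rfl <| by
    simp [parisiChain, parisiBlockSize, blockAverage_one]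

theorem rank_parisiChain_one_sub_zero (hm0 : m 0 = N) (hmpos : ∀ k ≤ r, 0 < m k)
    (hchain : ∀ k ∈ Icc 1 r, m k ∣ m (k - 1)) :
    (parisiChain N r m 1 - parisiChain N r m 0).rank = 1 := by
  have hidem := (OrthogonalIdempotents.sub_of_chain (parisiChain_mul hm0 hmpos hchain)).idem 0
  have hN : (N : ℝ) ≠ 0 := by exact_mod_cast (hm0 ▸ hmpos 0 (Nat.zero_le r)).ne'
  apply Nat.cast_injective (R := ℝ)
  rw [← Matrix.trace_eq_rank_of_isIdempotentElem hidem]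
  simp [parisiChain, trace_blockAverage, parisiBlockSize, hm0, hN]

theorem rank_parisiChain_sub {j : ℕ} (hm0 : m 0 = N) (hmpos : ∀ k ≤ r, 0 < m k)
    (hchain : ∀ k ∈ Icc 1 r, m k ∣ m (k - 1)) (hj : 1 ≤ j) :
    (parisiChain N r m (j + 1) - parisiChain N r m j).rank =
      N / parisiBlockSize r m j - N / parisiBlockSize r m (j - 1) := by
  obtain ⟨k, rfl⟩ := Nat.exists_eq_add_of_le' hj
  have hidem :=
    (OrthogonalIdempotents.sub_of_chain (parisiChain_mul hm0 hmpos hchain)).idem (k + 1)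
  have hle : N / parisiBlockSize r m k ≤ N / parisiBlockSize r m (k + 1) :=
    Nat.div_le_div_left (Nat.le_of_dvd (parisiBlockSize_pos hmpos k)
      (parisiBlockSize_dvd_of_le hchain k.le_succ)) (parisiBlockSize_pos hmpos _)
  apply Nat.cast_injective (R := ℝ)
  rw [← Matrix.trace_eq_rank_of_isIdempotentElem hidem, Nat.add_sub_cancel, Nat.cast_sub hle,
    Nat.cast_div_charZero (parisiBlockSize_dvd hm0 hchain _),
    Nat.cast_div_charZero (parisiBlockSize_dvd hm0 hchain _), Matrix.trace_sub]
  simp only [parisiChain, trace_blockAverage]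

theorem sum_Icc_parisiWeight {a : ℕ} (ha : 1 ≤ a) (p : ℕ → ℝ) :
    ∑ k ∈ Icc a r, parisiWeight r m p k = ∑ k ∈ Icc a r, (m k : ℝ) * (p k - p (k - 1)) := by
  refine sum_congr rfl fun k hk ↦ ?_
  obtain ⟨hak, hkr⟩ := mem_Icc.1 hk
  simp [parisiWeight, parisiBlockSize, parisiStep, hkr, show k ≠ 0 by omega]

theorem parisiWeight_zero (hm0 : m 0 = N) (p : ℕ → ℝ) : parisiWeight r m p 0 = N * p 0 := by
  simp [parisiWeight, parisiStep, parisiBlockSize_of_le (Nat.zero_le r), hm0]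

theorem parisiWeight_succ_self (p : ℕ → ℝ) : parisiWeight r m p (r + 1) = 1 - p r := by
  simp [parisiWeight, parisiStep, parisiBlockSize_succ_self]

theorem parisiEigenvalue_zero (hm0 : m 0 = N) (p : ℕ → ℝ) :
    parisiEigenvalue r m p 0 =
      (1 - p r) + (∑ k ∈ Icc 1 r, (m k : ℝ) * (p k - p (k - 1))) + N * p 0 := by
  rw [parisiEigenvalue, ← range_eq_Ico, sum_range_add_two_eq_add_sum_Icc_add,
    sum_Icc_parisiWeight le_rfl, parisiWeight_zero hm0, parisiWeight_succ_self]
  ring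

theorem parisiEigenvalue_of_pos {j : ℕ} (hj : 1 ≤ j) (hjr : j ≤ r) (p : ℕ → ℝ) :
    parisiEigenvalue r m p j =
      (1 - p r) + ∑ k ∈ Icc j r, (m k : ℝ) * (p k - p (k - 1)) := by
  rw [parisiEigenvalue, sum_Ico_succ_top (by omega), Ico_add_one_right_eq_Icc,
    sum_Icc_parisiWeight hj, parisiWeight_succ_self, add_comm]

theorem parisiEigenvalue_succ_self (p : ℕ → ℝ) : parisiEigenvalue r m p (r + 1) = 1 - p r := by
  rw [parisiEigenvalue, Nat.Ico_succ_singleton, sum_singleton, parisiWeight_succ_self]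

theorem parisiMatrix_eq_sum_parisiWeight_smul (hm0 : m 0 = N) (hmpos : ∀ k ≤ r, 0 < m k)
    (p : ℕ → ℝ) :
    parisiMatrix N r m p =
      ∑ k ∈ range (r + 2), parisiWeight r m p k • parisiChain N r m (k + 1) := by
  have hblock : ∀ k, parisiWeight r m p k • parisiChain N r m (k + 1) =
      parisiStep r p k • blockOnes N (parisiBlockSize r m k) :=
    fun k ↦ smul_blockAverage (parisiBlockSize_pos hmpos k).ne' _
  rw [sum_congr rfl fun k _ ↦ hblock k, sum_range_add_two_eq_add_sum_Icc_add]
  ext i j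
  have hmid : ∑ k ∈ Icc 1 r, (parisiStep r p k • blockOnes N (parisiBlockSize r m k)) i j =
      ∑ k ∈ Icc 1 r, (p k - p (k - 1)) * (if (i : ℕ) / m k = (j : ℕ) / m k then 1 else 0) := by
    refine sum_congr rfl fun k hk ↦ ?_
    obtain ⟨h1k, hkr⟩ := mem_Icc.1 hk
    simp [parisiStep, parisiBlockSize, blockOnes, hkr, show k ≠ 0 by omega]
  have hfirst : (parisiStep r p 0 • blockOnes N (parisiBlockSize r m 0)) i j = p 0 := by
    simp [parisiStep, parisiBlockSize, blockOnes, hm0, Nat.div_eq_of_lt]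
  have hlast : (parisiStep r p (r + 1) • blockOnes N (parisiBlockSize r m (r + 1))) i j =
      if i = j then 1 - p r else 0 := by
    simp [parisiStep, parisiBlockSize, blockOnes, Fin.val_inj]
  rw [parisiMatrix, Matrix.of_apply, Matrix.add_apply, Matrix.add_apply, Matrix.sum_apply, hmid,
    hfirst, hlast]
  ring

theorem charpoly_parisiMatrix (hm0 : m 0 = N) (hmpos : ∀ k ≤ r, 0 < m k)
    (hchain : ∀ k ∈ Icc 1 r, m k ∣ m (k - 1)) (p : ℕ → ℝ) :
    (parisiMatrix N r m p).charpoly = ∏ j ∈ range (r + 2), (X - C (parisiEigenvalue r m p j)) ^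
      (parisiChain N r m (j + 1) - parisiChain N r m j).rank := by
  have hdecomp : parisiMatrix N r m p = ∑ j : Fin (r + 2),
      parisiEigenvalue r m p j • (parisiChain N r m (j + 1) - parisiChain N r m j) := by
    rw [parisiMatrix_eq_sum_parisiWeight_smul hm0 hmpos,
      sum_range_smul_eq_sum_range_sum_Ico_smul_sub _ rfl, Fin.sum_univ_eq_sum_range
        (fun j ↦ parisiEigenvalue r m p j • (parisiChain N r m (j + 1) - parisiChain N r m j))]
    rfl
  rw [hdecomp,
    (completeOrthogonalIdempotents_parisiChain hm0 hmpos hchain).matrix_charpoly_sum_smul]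
  exact Fin.prod_univ_eq_prod_range (fun j ↦ (X - C (parisiEigenvalue r m p j)) ^
    (parisiChain N r m (j + 1) - parisiChain N r m j).rank) _

end Parisi

theorem rRSB_parisi_spectrum_general (r N : ℕ) (m : ℕ → ℕ) (p : ℕ → ℝ)
    (hm0 : m 0 = N) (hmpos : ∀ k ≤ r, 0 < m k)
    (hchain : ∀ k ∈ Finset.Icc 1 r, m k ∣ m (k - 1))
    (P : Matrix (Fin N) (Fin N) ℝ)
    (hP : ∀ i j : Fin N,
      P i j = (if i = j then 1 - p r else 0) +
        (∑ k ∈ Finset.Icc 1 r,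
          (p k - p (k - 1)) * (if (i : ℕ) / m k = (j : ℕ) / m k then 1 else 0)) + p 0) :
    P.charpoly =
      (X - C (1 - p r)) ^ (N - N / m r) *
        (∏ j ∈ Finset.Icc 1 r,
          (X - C ((1 - p r) + ∑ k ∈ Finset.Icc j r, (m k : ℝ) * (p k - p (k - 1)))) ^
            (N / m j - N / m (j - 1))) *
        (X - C ((1 - p r) + (∑ k ∈ Finset.Icc 1 r, (m k : ℝ) * (p k - p (k - 1))) +
          (N : ℝ) * p 0)) := by
  obtain rfl : P = parisiMatrix N r m p := Matrix.ext hP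
  have hmid : ∀ j ∈ Icc 1 r, (X - C (parisiEigenvalue r m p j)) ^
      (parisiChain N r m (j + 1) - parisiChain N r m j).rank =
      (X - C ((1 - p r) + ∑ k ∈ Icc j r, (m k : ℝ) * (p k - p (k - 1)))) ^
        (N / m j - N / m (j - 1)) := by
    intro j hj
    obtain ⟨h1j, hjr⟩ := mem_Icc.1 hj
    rw [rank_parisiChain_sub hm0 hmpos hchain h1j, parisiEigenvalue_of_pos h1j hjr,
      parisiBlockSize_of_le hjr, parisiBlockSize_of_le (by omega)]
  rw [charpoly_parisiMatrix hm0 hmpos hchain, prod_range_add_two_eq_mul_prod_Icc_mul,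
    prod_congr rfl hmid, rank_parisiChain_one_sub_zero hm0 hmpos hchain,
    rank_parisiChain_sub hm0 hmpos hchain (by omega), Nat.add_sub_cancel,
    parisiBlockSize_succ_self, parisiBlockSize_of_le le_rfl, Nat.div_one,
    parisiEigenvalue_zero hm0, parisiEigenvalue_succ_self, pow_one]
  ring

/-- **Spectrum of the r-rsb Parisi overlap matrix.**
For a divisibility chain `m_r ∣ m_{r−1} ∣ ⋯ ∣ m₁ ∣ N` (with the convention `m₀ = N`), the
matrix `P = (1 − p_r)·I_N + Σ_{k=1}^{r} (p_k − p_{k−1})·(I_{N/m_k} ⊗ J_{m_k}) + p₀·J_N` has: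
eigenvalue `1 − p_r` with multiplicity `N − N/m_r`; for each `j ∈ {1,…,r}`, eigenvalue
`(1 − p_r) + Σ_{k=j}^{r} m_k (p_k − p_{k−1})` with multiplicity `N/m_j − N/m_{j−1}`; and
eigenvalue `(1 − p_r) + Σ_{k=1}^{r} m_k (p_k − p_{k−1}) + N·p₀` with multiplicity `1`.
Stated as a factorization of the characteristic polynomial. -/
theorem rRSB_parisi_spectrum (r N : ℕ) (hr : 1 ≤ r) (m : ℕ → ℕ) (p : ℕ → ℝ)
    (hN : 0 < N) (hm0 : m 0 = N) (hmpos : ∀ k ≤ r, 0 < m k)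
    (hchain : ∀ k ∈ Finset.Icc 1 r, m k ∣ m (k - 1))
    (P : Matrix (Fin N) (Fin N) ℝ)
    (hP : ∀ i j : Fin N,
      P i j = (if i = j then 1 - p r else 0) +
        (∑ k ∈ Finset.Icc 1 r,
          (p k - p (k - 1)) * (if (i : ℕ) / m k = (j : ℕ) / m k then 1 else 0)) + p 0) :
    P.charpoly =
      (X - C (1 - p r)) ^ (N - N / m r) *
        (∏ j ∈ Finset.Icc 1 r,
          (X - C ((1 - p r) + ∑ k ∈ Finset.Icc j r, (m k : ℝ) * (p k - p (k - 1)))) ^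
            (N / m j - N / m (j - 1))) *
        (X - C ((1 - p r) + (∑ k ∈ Finset.Icc 1 r, (m k : ℝ) * (p k - p (k - 1))) +
          (N : ℝ) * p 0)) :=
  rRSB_parisi_spectrum_general r N m p hm0 hmpos hchain P hP
end

section
/- Let 𝒴 ⊂ ℝ^m be a finite nonempty set, let r ≥ 2, let m₁, …, m_r be positive integers with m_r | m_{r−1} | ⋯ | m₂ | m₁, let c₂, …, c_r ∈ ℝ and w ∈ ℝ^m. Let z₂, …, z_r be independent standard Gaussian random vectors in ℝ^m. For a tuple Y = (y₁,…,y_{m₁}) ∈ 𝒴^{m₁}, for 2 ≤ j ≤ r and 1 ≤ i ≤ m₁/m_j write S_{i,j}(Y) = Σ_{a=(i−1)m_j+1}^{i·m_j} y_a, and write S(Y) = Σ_{a=1}^{m₁} y_a. Then Σ_{Y ∈ 𝒴^{m₁}} exp(Σ_{j=2}^{r} (c_j²/2)·Σ_{i=1}^{m₁/m_j} ‖S_{i,j}(Y)‖₂² + S(Y)ᵀw) = (E_{z₂}[(E_{z₃}[⋯(E_{z_r}[(Σ_{y ∈ 𝒴} exp(yᵀ(c₂z₂ + c₃z₃ + ⋯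 + c_r z_r + w)))^{m_r}])^{m_{r−1}/m_r}⋯])^{m₂/m₃}])^{m₁/m₂}. -/
open MeasureTheory ProbabilityTheory Finset

noncomputable section

/-- Nested Gaussian expectation–power structure. `nestedHS m 𝒴 w c e 0 v` is the base
partition sum `Σ_{y ∈ 𝒴} exp(yᵀ(v + w))`, and each further level `d + 1` integrates a fresh
standard Gaussian field `z` scaled by `c (d+1)` and raises the result to the power `e (d+1)`:
`nestedHS m 𝒴 w c e (d+1) v = E_z[(nestedHS m 𝒴 w c e d (v + c(d+1)·z))^(e (d+1))]`. -/
def nestedHS (m : ℕ) (𝒴 : Finset (Fin m → ℝ)) (w : Fin m → ℝ) (c : ℕ → ℝ) (e : ℕ → ℕ) :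
    ℕ → (Fin m → ℝ) → ℝ
  | 0, v => ∑ y ∈ 𝒴, Real.exp (∑ a : Fin m, y a * (v a + w a))
  | d + 1, v =>
      ∫ z : Fin m → ℝ,
        (nestedHS m 𝒴 w c e d (fun a => v a + c (d + 1) * z a)) ^ e (d + 1)
        ∂(Measure.pi fun _ : Fin m => gaussianReal 0 1)


/-!
For a standard Gaussian vector `z`, `E exp ⟨t, z⟩ = exp (‖t‖² / 2)`. Hence integrating out the
field `c z` in a sum over replica tuples `Y ∈ 𝒴^N` of `exp (energy + ⟨Σ_j y_j, u + c z⟩)` adds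
the quadratic term `c²/2 · ‖Σ_j y_j‖²` of the whole tuple to the energy. Raising such a sum to
the power `n` turns it into a sum over `nN`-tuples cut into `n` consecutive blocks, and every
block energy whose block size divides `N` is additive over these blocks. By induction, level `d`
of `nestedHS` is the replica sum over tuples of length `N_d = e_1 ⋯ e_d` with one quadratic term
of block size `N_k` for each level `k ≤ d`; for the exponents of the theorem `N_k = m_{r+1-k}`,
and the outer power `m₁/m₂` yields the left-hand side.
-/

section Gaussian

variable {ι : Type*} [Fintype ι]

lemma integrable_exp_sum_mul_gaussian (μ : ι → ℝ) (v : ι → NNReal) (t : ι → ℝ) :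
    Integrable (fun z : ι → ℝ => Real.exp (∑ i, t i * z i))
      (Measure.pi fun i => gaussianReal (μ i) (v i)) := by
  simp_rw [Real.exp_sum]
  exact Integrable.fintype_prod (f := fun i x => Real.exp (t i * x))
    fun i => integrable_exp_mul_gaussianReal (t i)

lemma integral_exp_sum_mul_gaussian (μ : ι → ℝ) (v : ι → NNReal) (t : ι → ℝ) :
    ∫ z : ι → ℝ, Real.exp (∑ i, t i * z i) ∂(Measure.pi fun i => gaussianReal (μ i) (v i)) =
      Real.exp (∑ i, (μ i * t i + v i * t i ^ 2 / 2)) := by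
  simp_rw [Real.exp_sum]
  rw [integral_fintype_prod_eq_prod (fun i x => Real.exp (t i * x))]
  exact Finset.prod_congr rfl fun i _ => congrFun mgf_id_gaussianReal (t i)

end Gaussian

-- Block `i` of `Z` is the run of consecutive indices `i * N, …, i * N + N - 1`.
def blocksEquiv (α : Type*) (n N : ℕ) : (Fin (n * N) → α) ≃ (Fin n → Fin N → α) :=
  (finProdFinEquiv.arrowCongr (Equiv.refl α)).symm.trans (Equiv.curry _ _ _)

@[simp]
lemma blocksEquiv_apply {α : Type*} {n N : ℕ} (Z : Fin (n * N) → α) (i : Fin n) (k : Fin N) :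
    blocksEquiv α n N Z i k = Z (finProdFinEquiv (i, k)) := rfl

lemma sum_eq_sum_blocksEquiv {R : Type*} [AddCommMonoid R] {n N : ℕ} (Z : Fin (n * N) → R) :
    ∑ j, Z j = ∑ i, ∑ k, blocksEquiv R n N Z i k := by
  rw [← finProdFinEquiv.sum_comp, Fintype.sum_prod_type]
  rfl

lemma sum_pow_eq_sum_prod_blocksEquiv {α R : Type*} [CommSemiring R] (s : Finset α) (n N : ℕ)
    (f : (Fin N → α) → R) :
    (∑ Y ∈ Fintype.piFinset (fun _ : Fin N => s), f Y) ^ n =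
      ∑ Z ∈ Fintype.piFinset (fun _ : Fin (n * N) => s), ∏ i, f (blocksEquiv α n N Z i) := by
  rw [sum_pow', eq_comm]
  refine Finset.sum_equiv (blocksEquiv α n N) (fun Z => ?_) fun _ _ => rfl
  simp only [Fintype.mem_piFinset, blocksEquiv_apply]
  rw [← finProdFinEquiv.forall_congr_right, Prod.forall]

lemma Nat.add_mul_eq_add_mul_iff_of_lt {q a b c d : ℕ} (ha : a < q) (hc : c < q) :
    a + q * b = c + q * d ↔ a = c ∧ b = d := by
  refine ⟨fun h => ?_, fun ⟨hac, hbd⟩ => hac ▸ hbd ▸ rfl⟩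
  have hq : 0 < q := by omega
  obtain ⟨hb, ha'⟩ := (Nat.div_mod_unique hq).2 ⟨h, ha⟩
  obtain ⟨hd, hc'⟩ := (Nat.div_mod_unique hq).2 ⟨rfl, hc⟩
  exact ⟨ha'.symm.trans hc', hb.symm.trans hd⟩

section BlockSums

variable {R : Type*} [AddCommMonoid R]

def blockSum {M : ℕ} (B : ℕ) (y : Fin M → R) (p : ℕ) : R :=
  ∑ j ∈ univ.filter (fun j : Fin M => (j : ℕ) / B = p), y j

lemma blockSum_self {M : ℕ} (y : Fin M → R) : blockSum M y 0 = ∑ j, y j := by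
  refine Finset.sum_congr (Finset.filter_true_of_mem fun j _ => ?_) fun _ _ => rfl
  exact Nat.div_eq_of_lt j.2

lemma blockSum_blocksEquiv {n N B : ℕ} (hB : B ∣ N) (y : Fin (n * N) → R) (i : Fin n)
    {t : ℕ} (ht : t < N / B) :
    blockSum B y (t + N / B * i) = blockSum B (blocksEquiv R n N y i) t := by
  obtain ⟨q, rfl⟩ := hB
  have hB : 0 < B := Nat.pos_of_ne_zero fun h => by simp [h] at ht
  rw [Nat.mul_div_cancel_left q hB] at ht ⊢
  have hindex : ∀ (i' : Fin n) (k : Fin (B * q)),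
      (finProdFinEquiv (i', k) : ℕ) / B = t + q * i ↔ i' = i ∧ (k : ℕ) / B = t := by
    intro i' k
    rw [finProdFinEquiv_apply_val, mul_assoc, Nat.add_mul_div_left _ _ hB,
      Nat.add_mul_eq_add_mul_iff_of_lt (Nat.div_lt_of_lt_mul k.2) ht, Fin.val_inj, and_comm]
  rw [blockSum, Finset.sum_filter, ← finProdFinEquiv.sum_comp, Fintype.sum_prod_type]
  simp only [hindex, ite_and, Finset.sum_ite_irrel, Finset.sum_const_zero, Fintype.sum_ite_eq',
    blockSum, Finset.sum_filter, blocksEquiv_apply]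

end BlockSums

section Energy

variable {m : ℕ}

def blockEnergy {M : ℕ} (B : ℕ) (Y : Fin M → Fin m → ℝ) : ℝ :=
  ∑ p ∈ range (M / B), ∑ a, blockSum B (fun j => Y j a) p ^ 2

lemma blockEnergy_self {M : ℕ} (Y : Fin M → Fin m → ℝ) :
    blockEnergy M Y = ∑ a, (∑ j, Y j a) ^ 2 := by
  rcases M.eq_zero_or_pos with rfl | hM
  · simp [blockEnergy]
  · simp only [blockEnergy, Nat.div_self hM, Finset.sum_range_one, blockSum_self]

lemma blockEnergy_eq_sum_blocksEquiv {n N B : ℕ} (hB : B ∣ N) (Z : Fin (n * N) → Fin m → ℝ) :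
    blockEnergy B Z = ∑ i, blockEnergy B (blocksEquiv _ n N Z i) := by
  rw [blockEnergy, Nat.mul_div_assoc n hB, Finset.sum_range, ← finProdFinEquiv.sum_comp,
    Fintype.sum_prod_type]
  refine Fintype.sum_congr _ _ fun i => ?_
  rw [blockEnergy, Finset.sum_range]
  refine Fintype.sum_congr _ _ fun t => ?_
  rw [finProdFinEquiv_apply_val]
  exact Fintype.sum_congr _ _ fun a => by rw [blockSum_blocksEquiv hB _ i t.2]; rfl

def multiscaleEnergy (Ks : Finset ℕ) (L : ℕ → ℕ) (γ : ℕ → ℝ) {M : ℕ} (Y : Fin M → Fin m → ℝ) :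
    ℝ :=
  ∑ k ∈ Ks, γ k * blockEnergy (L k) Y

lemma multiscaleEnergy_eq_sum_blocksEquiv {Ks : Finset ℕ} {L : ℕ → ℕ} (γ : ℕ → ℝ) {n N : ℕ}
    (hL : ∀ k ∈ Ks, L k ∣ N) (Z : Fin (n * N) → Fin m → ℝ) :
    multiscaleEnergy Ks L γ Z = ∑ i, multiscaleEnergy Ks L γ (blocksEquiv _ n N Z i) := by
  simp only [multiscaleEnergy]
  rw [Finset.sum_comm]
  exact Finset.sum_congr rfl fun k hk => by rw [blockEnergy_eq_sum_blocksEquiv (hL k hk), mul_sum]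

def replicaSum (𝒴 : Finset (Fin m → ℝ)) (N : ℕ) (Ks : Finset ℕ) (L : ℕ → ℕ) (γ : ℕ → ℝ)
    (u : Fin m → ℝ) : ℝ :=
  ∑ Y ∈ Fintype.piFinset (fun _ : Fin N => 𝒴),
    Real.exp (multiscaleEnergy Ks L γ Y + ∑ a, (∑ j, Y j a) * u a)

variable {𝒴 : Finset (Fin m → ℝ)} {Ks : Finset ℕ} {L : ℕ → ℕ} {γ : ℕ → ℝ}

lemma replicaSum_pow {N : ℕ} (hL : ∀ k ∈ Ks, L k ∣ N) (u : Fin m → ℝ) (n : ℕ) :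
    replicaSum 𝒴 N Ks L γ u ^ n = replicaSum 𝒴 (n * N) Ks L γ u := by
  rw [replicaSum, sum_pow_eq_sum_prod_blocksEquiv]
  refine Finset.sum_congr rfl fun Z _ => ?_
  have hfield : ∑ a, (∑ j, Z j a) * u a =
      ∑ i, ∑ a, (∑ k, blocksEquiv _ n N Z i k a) * u a := by
    rw [Finset.sum_comm]
    exact Finset.sum_congr rfl fun a _ => by rw [← Finset.sum_mul, sum_eq_sum_blocksEquiv]; rfl
  rw [← Real.exp_sum, Finset.sum_add_distrib, multiscaleEnergy_eq_sum_blocksEquiv γ hL, hfield]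

lemma replicaSum_pow_div {N M : ℕ} (hL : ∀ k ∈ Ks, L k ∣ N) (hN : N ∣ M) (u : Fin m → ℝ) :
    replicaSum 𝒴 N Ks L γ u ^ (M / N) = replicaSum 𝒴 M Ks L γ u := by
  obtain ⟨n, rfl⟩ := hN
  rcases N.eq_zero_or_pos with rfl | hN
  · rw [zero_mul]
    simp [replicaSum, multiscaleEnergy, blockEnergy]
  · rw [Nat.mul_div_cancel_left n hN, mul_comm, replicaSum_pow hL]

lemma integral_replicaSum_gaussian {N k : ℕ} (hk : k ∉ Ks) (hLk : L k = N) {c : ℝ}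
    (hγ : γ k = c ^ 2 / 2) (u : Fin m → ℝ) :
    ∫ z : Fin m → ℝ, replicaSum 𝒴 N Ks L γ (fun a => u a + c * z a)
        ∂(Measure.pi fun _ : Fin m => gaussianReal 0 1) =
      replicaSum 𝒴 N (insert k Ks) L γ u := by
  have hsplit : ∀ (Y : Fin N → Fin m → ℝ) (z : Fin m → ℝ),
      Real.exp (multiscaleEnergy Ks L γ Y + ∑ a, (∑ j, Y j a) * (u a + c * z a)) =
        Real.exp (multiscaleEnergy Ks L γ Y + ∑ a, (∑ j, Y j a) * u a) *
          Real.exp (∑ a, (c * ∑ j, Y j a) * z a) := by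
    intro Y z
    rw [← Real.exp_add, add_assoc, ← Finset.sum_add_distrib]
    congr 2
    exact Finset.sum_congr rfl fun a _ => by ring
  simp only [replicaSum, hsplit]
  rw [integral_finsetSum _ fun Y _ => (integrable_exp_sum_mul_gaussian _ _ _).const_mul _]
  refine Finset.sum_congr rfl fun Y _ => ?_
  rw [integral_const_mul, integral_exp_sum_mul_gaussian, ← Real.exp_add]
  congr 1
  rw [multiscaleEnergy, multiscaleEnergy, Finset.sum_insert hk, hLk, blockEnergy_self, hγ,
    Finset.mul_sum]
  have hquad : ∑ a, ((0 : ℝ) * (c * ∑ j, Y j a) + (1 : NNReal) * (c * ∑ j, Y j a) ^ 2 / 2) =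
      ∑ a, c ^ 2 / 2 * (∑ j, Y j a) ^ 2 :=
    Finset.sum_congr rfl fun a _ => by push_cast; ring
  rw [hquad]
  ring

end Energy

def blockLength (e : ℕ → ℕ) : ℕ → ℕ
  | 0 => 1
  | d + 1 => e (d + 1) * blockLength e d

lemma blockLength_dvd (e : ℕ → ℕ) {k d : ℕ} (h : k ≤ d) : blockLength e k ∣ blockLength e d := by
  induction d, h using Nat.le_induction with
  | base => exact dvd_rfl
  | succ d _ ih => exact ih.mul_left _

theorem nestedHS_eq_replicaSum (m : ℕ) (𝒴 : Finset (Fin m → ℝ)) (w : Fin m → ℝ) (c : ℕ → ℝ)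
    (e : ℕ → ℕ) (d : ℕ) (v : Fin m → ℝ) :
    nestedHS m 𝒴 w c e d v =
      replicaSum 𝒴 (blockLength e d) (Icc 1 d) (blockLength e) (fun k => c k ^ 2 / 2)
        (fun a => v a + w a) := by
  induction d generalizing v with
  | zero =>
    change _ = ∑ Y ∈ Fintype.piFinset (fun _ : Fin 1 => 𝒴),
      Real.exp (multiscaleEnergy (Icc 1 0) (blockLength e) _ Y + ∑ a, (∑ j : Fin 1, Y j a) * _)
    refine Finset.sum_equiv (Equiv.funUnique (Fin 1) _).symm (fun y => ?_) fun y _ => ?_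
    · simp
    · simp [multiscaleEnergy]
  | succ d ih =>
    have hL : ∀ k ∈ Icc 1 d, blockLength e k ∣ blockLength e d :=
      fun k hk => blockLength_dvd e (mem_Icc.1 hk).2
    calc nestedHS m 𝒴 w c e (d + 1) v
        = ∫ z : Fin m → ℝ, replicaSum 𝒴 (blockLength e (d + 1)) (Icc 1 d) (blockLength e)
            (fun k => c k ^ 2 / 2) (fun a => (v a + w a) + c (d + 1) * z a)
            ∂(Measure.pi fun _ : Fin m => gaussianReal 0 1) := by
          rw [nestedHS]
          congr 1 with z
          rw [ih, replicaSum_pow hL]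
          congr 1 with a
          ring
      _ = replicaSum 𝒴 (blockLength e (d + 1)) (insert (d + 1) (Icc 1 d)) (blockLength e)
            (fun k => c k ^ 2 / 2) (fun a => v a + w a) :=
          integral_replicaSum_gaussian (by simp) rfl rfl _
      _ = _ := by rw [Finset.insert_Icc_right_eq_Icc_add_one (by omega)]

lemma blockLength_replica {μ : ℕ → ℕ} {r : ℕ} (hchain : ∀ j, 1 ≤ j → j < r → μ (j + 1) ∣ μ j)
    {d : ℕ} (hd : 1 ≤ d) (hdr : d < r) :
    blockLength (fun d => if d = 1 then μ r else μ (r + 1 - d) / μ (r + 2 - d)) d =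
      μ (r + 1 - d) := by
  induction d, hd using Nat.le_induction with
  | base => simp [blockLength]
  | succ d hd ih =>
    have hdvd : μ (r + 1 - d) ∣ μ (r - d) := by
      simpa [show r - d + 1 = r + 1 - d by omega] using hchain (r - d) (by omega) (by omega)
    rw [blockLength, ih (by omega), if_neg (by omega), show r + 1 - (d + 1) = r - d by omega,
      show r + 2 - (d + 1) = r + 1 - d by omega, Nat.div_mul_cancel hdvd]

lemma multiscaleEnergy_replica {μ : ℕ → ℕ} {r : ℕ}
    (hchain : ∀ j, 1 ≤ j → j < r → μ (j + 1) ∣ μ j) (c : ℕ → ℝ) {m M : ℕ}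
    (Y : Fin M → Fin m → ℝ) :
    multiscaleEnergy (Icc 1 (r - 1))
        (blockLength fun d => if d = 1 then μ r else μ (r + 1 - d) / μ (r + 2 - d))
        (fun k => c (r + 1 - k) ^ 2 / 2) Y =
      multiscaleEnergy (Icc 2 r) μ (fun j => c j ^ 2 / 2) Y := by
  refine Finset.sum_nbij' (fun k => r + 1 - k) (fun j => r + 1 - j) ?_ ?_ ?_ ?_ ?_ <;>
    intro k hk <;> simp only [mem_Icc] at hk ⊢
  any_goals omega
  rw [blockLength_replica hchain hk.1 (by omega)]

theorem hubbard_stratonovich_nested_general (m r : ℕ) (hr : 2 ≤ r)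
    (mseq : ℕ → ℕ)
    (hchain : ∀ j, 1 ≤ j → j < r → mseq (j + 1) ∣ mseq j)
    (𝒴 : Finset (Fin m → ℝ)) (c : ℕ → ℝ) (w : Fin m → ℝ) :
    (∑ Y ∈ Fintype.piFinset (fun _ : Fin (mseq 1) => 𝒴),
        Real.exp
          ((∑ j ∈ Finset.Icc 2 r,
              c j ^ 2 / 2 *
                ∑ i ∈ Finset.range (mseq 1 / mseq j),
                  ∑ a : Fin m,
                    (∑ jj ∈ Finset.univ.filter
                        (fun jj : Fin (mseq 1) => (jj : ℕ) / mseq j = i), Y jj a) ^ 2) +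
            ∑ a : Fin m, (∑ jj : Fin (mseq 1), Y jj a) * w a)) =
      (nestedHS m 𝒴 w (fun d => c (r + 1 - d))
          (fun d => if d = 1 then mseq r else mseq (r + 1 - d) / mseq (r + 2 - d))
          (r - 1) (fun _ => 0)) ^ (mseq 1 / mseq 2) := by
  have hlength := blockLength_replica hchain (d := r - 1) (by omega) (by omega)
  rw [show r + 1 - (r - 1) = 2 by omega] at hlength
  rw [nestedHS_eq_replicaSum, hlength, replicaSum_pow_div
    (fun k hk => hlength ▸ blockLength_dvd _ (mem_Icc.1 hk).2) (hchain 1 le_rfl (by omega))]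
  simp only [replicaSum, multiscaleEnergy_replica hchain, zero_add]
  rfl

/-- **Nested (hierarchical) Hubbard–Stratonovich decoupling identity** underlying the `r`-th
level of the Parisi ansatz.  For `m_r ∣ m_{r−1} ∣ ⋯ ∣ m₂ ∣ m₁`, with block sums
`S_{i,j}(Y) = Σ_{a in the i-th block of size m_j} y_a` and `S(Y) = Σ_{a=1}^{m₁} y_a`,
`Σ_{Y ∈ 𝒴^{m₁}} exp(Σ_{j=2}^{r} (c_j²/2)·Σ_{i=1}^{m₁/m_j} ‖S_{i,j}(Y)‖₂² + S(Y)ᵀw)`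
equals the nested quantity
`(E_{z₂}[(E_{z₃}[⋯(E_{z_r}[(Σ_{y∈𝒴} exp(yᵀ(c₂z₂+⋯+c_r z_r + w)))^{m_r}])^{m_{r−1}/m_r}⋯])^{m₂/m₃}])^{m₁/m₂}`,
where level `d` of `nestedHS` corresponds to replica level `j = r + 1 − d`. -/
theorem hubbard_stratonovich_nested (m r : ℕ) (hr : 2 ≤ r)
    (mseq : ℕ → ℕ) (hmpos : ∀ j, 1 ≤ j → j ≤ r → 0 < mseq j)
    (hchain : ∀ j, 1 ≤ j → j < r → mseq (j + 1) ∣ mseq j)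
    (𝒴 : Finset (Fin m → ℝ)) (h𝒴 : 𝒴.Nonempty) (c : ℕ → ℝ) (w : Fin m → ℝ) :
    (∑ Y ∈ Fintype.piFinset (fun _ : Fin (mseq 1) => 𝒴),
        Real.exp
          ((∑ j ∈ Finset.Icc 2 r,
              c j ^ 2 / 2 *
                ∑ i ∈ Finset.range (mseq 1 / mseq j),
                  ∑ a : Fin m,
                    (∑ jj ∈ Finset.univ.filter
                        (fun jj : Fin (mseq 1) => (jj : ℕ) / mseq j = i), Y jj a) ^ 2) +
            ∑ a : Fin m, (∑ jj : Fin (mseq 1), Y jj a) * w a)) =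
      (nestedHS m 𝒴 w (fun d => c (r + 1 - d))
          (fun d => if d = 1 then mseq r else mseq (r + 1 - d) / mseq (r + 2 - d))
          (r - 1) (fun _ => 0)) ^ (mseq 1 / mseq 2) :=
  hubbard_stratonovich_nested_general m r hr mseq hchain 𝒴 c w
end
end
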